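/- Let d, p ≥ 1, let A be a d×d real matrix and B a d×p real matrix, let β ≥ 0, ρ̄ ∈ (0,1), γ ≥ 0, and let k ≥ 1 be an integer. Suppose ‖A^m‖₂ ≤ β·ρ̄^m for every integer m ≥ 0, and let u : ℕ → ℝ^p satisfy Σ_{s=kℓ}^{k(ℓ+1)−1} ‖u_s‖₂² ≤ k·γ² for every integer ℓ ≥ 0. Define x_t := Σ_{s=0}^{t−1} A^{t−1−s}·B·u_s for t ≥ 0. Then ‖x_t‖₂ ≤ 2·β·‖B‖₂·k·γ/(1 − ρ̄^k) for every t ≥ 0. -/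

import Mathlib

/-!
Each summand of `x_t` is at most `β ‖B‖ ρ̄^(t-1-s) ‖u_s‖`. Group the inputs into blocks of
length `k`: by Cauchy–Schwarz a block has `∑ ‖u_s‖ ≤ k γ`, and every input in the block `ℓ`
is damped by at least `(ρ̄^k)^(q-1-ℓ)`, where `q = ⌊(t-1)/k⌋` is the block of the latest input.
The weights of the blocks thus form a geometric series in which only the last two blocks get
weight `1`, whence `∑ ≤ 1 + 1/(1-ρ̄^k) ≤ 2/(1-ρ̄^k)`.
-/

noncomputable section

open Matrix

/-- Euclidean norm of a real vector. -/
def enormR {n : Type*} [Fintype n] (v : n → ℝ) : ℝ :=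
  Real.sqrt (∑ i, (v i) ^ 2)

/-- Spectral norm (ℓ² → ℓ² operator norm) of a real matrix. -/
def snormR {m n : Type*} [Fintype m] [Fintype n] (M : Matrix m n ℝ) : ℝ :=
  sSup {r : ℝ | ∃ v : n → ℝ, enormR v ≤ 1 ∧ r = enormR (M.mulVec v)}

open Finset
open scoped Matrix.Norms.L2Operator

section Norms

variable {m n : Type*} [Fintype m] [Fintype n]

theorem enormR_eq_norm_toLp (v : n → ℝ) : enormR v = ‖WithLp.toLp 2 v‖ := by
  simp [enormR, EuclideanSpace.norm_eq]

theorem enormR_nonneg (v : n → ℝ) : 0 ≤ enormR v :=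
  Real.sqrt_nonneg _

theorem enormR_sum_le {ι : Type*} (s : Finset ι) (f : ι → n → ℝ) :
    enormR (∑ i ∈ s, f i) ≤ ∑ i ∈ s, enormR (f i) := by
  simp only [enormR_eq_norm_toLp, WithLp.toLp_sum]
  exact norm_sum_le _ _

theorem snormR_eq_l2_opNorm [DecidableEq n] (M : Matrix m n ℝ) : snormR M = ‖M‖ := by
  rw [l2_opNorm_def, ← ContinuousLinearMap.sSup_unitClosedBall_eq_norm, snormR]
  congr 1
  ext r
  simp only [Set.mem_ofPred_eq, Set.mem_image, Metric.mem_closedBall, dist_zero_right,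
    enormR_eq_norm_toLp]
  constructor
  · rintro ⟨v, hv, rfl⟩
    exact ⟨WithLp.toLp 2 v, hv, rfl⟩
  · rintro ⟨x, hx, rfl⟩
    exact ⟨x.ofLp, hx, rfl⟩

theorem snormR_nonneg (M : Matrix m n ℝ) : 0 ≤ snormR M := by
  classical
  exact snormR_eq_l2_opNorm M ▸ norm_nonneg M

theorem enormR_mulVec_le (M : Matrix m n ℝ) (v : n → ℝ) :
    enormR (M *ᵥ v) ≤ snormR M * enormR v := by
  classical
  rw [snormR_eq_l2_opNorm, enormR_eq_norm_toLp, enormR_eq_norm_toLp]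
  exact M.l2_opNorm_mulVec (WithLp.toLp 2 v)

end Norms

theorem sum_le_card_mul_of_sum_sq_le {ι : Type*} (s : Finset ι) (f : ι → ℝ) {γ : ℝ}
    (hγ : 0 ≤ γ) (h : ∑ i ∈ s, f i ^ 2 ≤ s.card * γ ^ 2) : ∑ i ∈ s, f i ≤ s.card * γ := by
  refine le_of_sq_le_sq ?_ (by positivity)
  calc (∑ i ∈ s, f i) ^ 2 ≤ s.card * ∑ i ∈ s, f i ^ 2 := sq_sum_le_card_mul_sum_sq
    _ ≤ s.card * (s.card * γ ^ 2) := by gcongr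
    _ = (s.card * γ) ^ 2 := by ring

theorem Finset.sum_range_mul_eq_sum_sum {M : Type*} [AddCommMonoid M] (f : ℕ → M) (k L : ℕ) :
    ∑ i ∈ range (k * L), f i = ∑ ℓ ∈ range L, ∑ j ∈ range k, f (k * ℓ + j) := by
  induction L with
  | zero => simp
  | succ L ih => rw [Nat.mul_succ, sum_range_add, ih, sum_range_succ]

section BlockDecay

variable {ρ : ℝ}

theorem sum_range_pow_sub_le (hρ0 : 0 ≤ ρ) (hρ1 : ρ < 1) (q : ℕ) :
    ∑ ℓ ∈ range (q + 1), ρ ^ (q - 1 - ℓ) ≤ 2 / (1 - ρ) := by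
  have hgeom : ∑ i ∈ range q, ρ ^ i ≤ 1 / (1 - ρ) := by
    rw [range_eq_Ico]
    simpa using geom_sum_Ico_le_of_lt_one (m := 0) (n := q) hρ0 hρ1
  have hone : 1 ≤ 1 / (1 - ρ) := by
    rw [le_div_iff₀ (by linarith)]
    linarith
  calc ∑ ℓ ∈ range (q + 1), ρ ^ (q - 1 - ℓ) = ∑ i ∈ range (q + 1), ρ ^ (i - 1) := by
        rw [← sum_range_reflect]
        refine sum_congr rfl fun ℓ hℓ => ?_
        rw [mem_range] at hℓ
        congr 1
        omega
    _ = ∑ i ∈ range q, ρ ^ i + 1 := by simp [sum_range_succ']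
    _ ≤ 1 / (1 - ρ) + 1 / (1 - ρ) := by linarith
    _ = 2 / (1 - ρ) := by ring

theorem pow_sub_mul_add_le_pow_pow (hρ0 : 0 ≤ ρ) (hρ1 : ρ < 1) {k q t ℓ j : ℕ} (hq : k * q ≤ t - 1)
    (hj : j < k) : ρ ^ (t - 1 - (k * ℓ + j)) ≤ (ρ ^ k) ^ (q - 1 - ℓ) := by
  rw [← pow_mul]
  refine pow_le_pow_of_le_one hρ0 hρ1.le ?_
  rw [Nat.mul_sub, Nat.mul_sub, mul_one]
  omega

theorem sum_range_pow_mul_le_of_block_sum_le (hρ0 : 0 ≤ ρ) (hρ1 : ρ < 1) {k : ℕ} (hk : 0 < k)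
    {a : ℕ → ℝ} (ha : ∀ s, 0 ≤ a s) {M : ℝ} (hM : ∀ ℓ, ∑ j ∈ range k, a (k * ℓ + j) ≤ M)
    (t : ℕ) : ∑ s ∈ range t, ρ ^ (t - 1 - s) * a s ≤ 2 * M / (1 - ρ ^ k) := by
  set q := (t - 1) / k
  have hq : k * q ≤ t - 1 := Nat.mul_div_le (t - 1) k
  have ht : t ≤ k * (q + 1) := by
    have : t - 1 < k * (q + 1) := Nat.lt_mul_div_succ (t - 1) hk
    omega
  have hM0 : 0 ≤ M := (sum_nonneg fun j _ => ha _).trans (hM 0)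
  have hρk0 : 0 ≤ ρ ^ k := pow_nonneg hρ0 k
  have hρk1 : ρ ^ k < 1 := pow_lt_one₀ hρ0 hρ1 hk.ne'
  have hblock : ∀ ℓ, ∑ j ∈ range k, ρ ^ (t - 1 - (k * ℓ + j)) * a (k * ℓ + j)
      ≤ (ρ ^ k) ^ (q - 1 - ℓ) * M := fun ℓ => calc
    _ ≤ ∑ j ∈ range k, (ρ ^ k) ^ (q - 1 - ℓ) * a (k * ℓ + j) :=
      sum_le_sum fun j hj =>
        mul_le_mul_of_nonneg_right (pow_sub_mul_add_le_pow_pow hρ0 hρ1 hq (mem_range.1 hj)) (ha _)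
    _ = (ρ ^ k) ^ (q - 1 - ℓ) * ∑ j ∈ range k, a (k * ℓ + j) := (mul_sum ..).symm
    _ ≤ (ρ ^ k) ^ (q - 1 - ℓ) * M := mul_le_mul_of_nonneg_left (hM ℓ) (by positivity)
  calc ∑ s ∈ range t, ρ ^ (t - 1 - s) * a s
      ≤ ∑ s ∈ range (k * (q + 1)), ρ ^ (t - 1 - s) * a s :=
        sum_le_sum_of_subset_of_nonneg (range_subset_range.2 ht) fun s _ _ =>
          mul_nonneg (pow_nonneg hρ0 _) (ha s)
    _ = ∑ ℓ ∈ range (q + 1), ∑ j ∈ range k, ρ ^ (t - 1 - (k * ℓ + j)) * a (k * ℓ + j) :=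
        sum_range_mul_eq_sum_sum _ k (q + 1)
    _ ≤ ∑ ℓ ∈ range (q + 1), (ρ ^ k) ^ (q - 1 - ℓ) * M := sum_le_sum fun ℓ _ => hblock ℓ
    _ = (∑ ℓ ∈ range (q + 1), (ρ ^ k) ^ (q - 1 - ℓ)) * M := (sum_mul ..).symm
    _ ≤ 2 / (1 - ρ ^ k) * M :=
        mul_le_mul_of_nonneg_right (sum_range_pow_sub_le hρk0 hρk1 q) hM0
    _ = 2 * M / (1 - ρ ^ k) := by ring

end BlockDecay

theorem stmt9_general {d p : ℕ}
    (A : Matrix (Fin d) (Fin d) ℝ) (B : Matrix (Fin d) (Fin p) ℝ)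
    (β ρ γ : ℝ) (hβ : 0 ≤ β) (hρ0 : 0 < ρ) (hρ1 : ρ < 1) (hγ : 0 ≤ γ)
    (k : ℕ) (hk : 1 ≤ k)
    (hA : ∀ m : ℕ, snormR (A ^ m) ≤ β * ρ ^ m)
    (u : ℕ → Fin p → ℝ)
    (hu : ∀ ℓ : ℕ, ∑ s ∈ Finset.range k, enormR (u (k * ℓ + s)) ^ 2 ≤ k * γ ^ 2) :
    ∀ t : ℕ,
      enormR (∑ s ∈ Finset.range t, ((A ^ (t - 1 - s)) * B).mulVec (u s)) ≤
        2 * β * snormR B * k * γ / (1 - ρ ^ k) := by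
  intro t
  have hterm : ∀ s, enormR ((A ^ (t - 1 - s) * B) *ᵥ u s)
      ≤ β * snormR B * (ρ ^ (t - 1 - s) * enormR (u s)) := fun s => by
    rw [← mulVec_mulVec]
    calc _ ≤ snormR (A ^ (t - 1 - s)) * enormR (B *ᵥ u s) := enormR_mulVec_le _ _
      _ ≤ β * ρ ^ (t - 1 - s) * (snormR B * enormR (u s)) :=
          mul_le_mul (hA _) (enormR_mulVec_le _ _) (enormR_nonneg _)
            (mul_nonneg hβ (pow_nonneg hρ0.le _))
      _ = _ := by ring
  have hblock : ∀ ℓ, ∑ j ∈ range k, enormR (u (k * ℓ + j)) ≤ k * γ := fun ℓ => by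
    simpa using sum_le_card_mul_of_sum_sq_le (range k) _ hγ (by simpa using hu ℓ)
  have hC : 0 ≤ β * snormR B := mul_nonneg hβ (snormR_nonneg B)
  calc _ ≤ ∑ s ∈ range t, enormR ((A ^ (t - 1 - s) * B) *ᵥ u s) := enormR_sum_le _ _
    _ ≤ ∑ s ∈ range t, β * snormR B * (ρ ^ (t - 1 - s) * enormR (u s)) :=
        sum_le_sum fun s _ => hterm s
    _ = β * snormR B * ∑ s ∈ range t, ρ ^ (t - 1 - s) * enormR (u s) := (mul_sum ..).symm
    _ ≤ β * snormR B * (2 * (k * γ) / (1 - ρ ^ k)) :=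
        mul_le_mul_of_nonneg_left (sum_range_pow_mul_le_of_block_sum_le hρ0.le hρ1 hk
          (fun s => enormR_nonneg _) hblock t) hC
    _ = _ := by ring

/-- **Deterministic state-norm bound.**
If `‖A^m‖₂ ≤ β·ρ̄^m` and each length-`k` block of the input has average power at most `γ²`,
then the noiseless response `x_t = Σ_{s<t} A^{t−1−s}·B·u_s` satisfies
`‖x_t‖₂ ≤ 2·β·‖B‖₂·k·γ/(1 − ρ̄^k)` for every `t`. -/
theorem stmt9 {d p : ℕ} (hd : 1 ≤ d) (hp : 1 ≤ p)
    (A : Matrix (Fin d) (Fin d) ℝ) (B : Matrix (Fin d) (Fin p) ℝ)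
    (β ρ γ : ℝ) (hβ : 0 ≤ β) (hρ0 : 0 < ρ) (hρ1 : ρ < 1) (hγ : 0 ≤ γ)
    (k : ℕ) (hk : 1 ≤ k)
    (hA : ∀ m : ℕ, snormR (A ^ m) ≤ β * ρ ^ m)
    (u : ℕ → Fin p → ℝ)
    (hu : ∀ ℓ : ℕ, ∑ s ∈ Finset.range k, enormR (u (k * ℓ + s)) ^ 2 ≤ k * γ ^ 2) :
    ∀ t : ℕ,
      enormR (∑ s ∈ Finset.range t, ((A ^ (t - 1 - s)) * B).mulVec (u s)) ≤
        2 * β * snormR B * k * γ / (1 - ρ ^ k) :=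
  stmt9_general A B β ρ γ hβ hρ0 hρ1 hγ k hk hA u hu
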